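/- Suppose in addition that A† : S(ℝⁿ) → S(ℝⁿ) and Ã† : S(ℝ^{n+k}) → S(ℝ^{n+k}) are continuous linear operators with (Aφ|φ')_{L²(ℝⁿ)} = (φ|A†φ')_{L²(ℝⁿ)} for all φ,φ' ∈ S(ℝⁿ), and that T*_{Ŝ,χ} ∘ Ã† = A† ∘ T*_{Ŝ,χ} on S(ℝ^{n+k}) for every χ ∈ S(ℝᵏ). Let ψ ∈ S'(ℝⁿ) be nonzero and λ ∈ ℂ be such that ⟨ψ, conj(A†φ)⟩ = λ⟨ψ, conj(φ)⟩ for all φ ∈ S(ℝⁿ), and let χ ∈ S(ℝᵏ) be nonzero. Then the tempered distribution Ψ ∈ S'(ℝ^{n+k}) defined by ⟨Ψ, conj(Θ)⟩ := ⟨ψ, conj(T*_{Ŝ,χ}Θ)⟩ for Θ ∈ S(ℝ^{n+k}) is well defined, nonzero, and satisfies ⟨Ψ, conj(Ã†Θ)⟩ = λ⟨Ψ, conj(Θ)⟩ for all Θ ∈ S(ℝ^{n+k}); i.e. generalized eigenvectors of A give rise to generalized eigenvectors of Ã with the same generalized eigenvalue. -/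

import Mathlib

/-!
Since `T*_{Ŝ,χ}` intertwines `Ã†` with `A†`, the functional `Θ ↦ ⟨ψ, conj(T*_{Ŝ,χ} Θ̄)⟩`
inherits the eigen-relation of `ψ`; it is nonzero because
`T*_{Ŝ,χ} Ŝ⁻¹(u ⊗ χ) = ‖χ‖² u`. The real content is that `Ψ` is continuous, i.e. that the
partial integral `Φ ↦ (x ↦ ∫ Φ(x, y) dy)` is a continuous linear map of Schwartz spaces: by the
projection-slice theorem and Fourier inversion it is `F⁻¹ ∘ (restriction to ℝⁿ × {0}) ∘ F`.
-/

open MeasureTheory Complex SchwartzMap FourierTransform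
open scoped ComplexConjugate RealInnerProductSpace

noncomputable section

namespace WithLp

variable (p : ENNReal) (U V : Type*) [NormedAddCommGroup U] [NormedSpace ℝ U]
  [NormedAddCommGroup V] [NormedSpace ℝ V]

def inlL : U →L[ℝ] WithLp p (U × V) :=
  ((prodContinuousLinearEquiv p ℝ U V).symm : U × V →L[ℝ] WithLp p (U × V)).comp
    (ContinuousLinearMap.inl ℝ U V)

@[simp] lemma inlL_apply (u : U) : inlL p U V u = toLp p (u, 0) := rfl

lemma isometry_inlL [Fact (1 ≤ p)] : Isometry (inlL p U V) :=
  AddMonoidHomClass.isometry_of_norm _ fun u => by simp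

end WithLp

namespace SchwartzMap

section Conjugation

variable {D D' : Type*} [NormedAddCommGroup D] [NormedSpace ℝ D]
  [NormedAddCommGroup D'] [NormedSpace ℝ D']

def conjCLM : 𝓢(D, ℂ) →L[ℝ] 𝓢(D, ℂ) := postcompCLM (conjCLE : ℂ →L[ℝ] ℂ)

@[simp] lemma conjCLM_apply (f : 𝓢(D, ℂ)) (x : D) : conjCLM f x = conj (f x) := rfl

@[simp] lemma conjCLM_conjCLM (f : 𝓢(D, ℂ)) : conjCLM (conjCLM f) = f := by
  ext x; simp

lemma conjCLM_smul (c : ℂ) (f : 𝓢(D, ℂ)) : conjCLM (c • f) = conj c • conjCLM f := by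
  ext x; simp

def conjugateCLM (T : 𝓢(D, ℂ) →L[ℂ] 𝓢(D', ℂ)) : 𝓢(D, ℂ) →L[ℂ] 𝓢(D', ℂ) where
  toFun f := conjCLM (T (conjCLM f))
  map_add' f g := by simp only [map_add]
  map_smul' c f := by simp only [conjCLM_smul, map_smul, conj_conj, RingHom.id_apply]
  cont := conjCLM.continuous.comp (T.continuous.comp conjCLM.continuous)

@[simp] lemma conjugateCLM_conjCLM (T : 𝓢(D, ℂ) →L[ℂ] 𝓢(D', ℂ)) (f : 𝓢(D, ℂ)) :
    conjugateCLM T (conjCLM f) = conjCLM (T f) := by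
  simp [conjugateCLM]

variable [MeasurableSpace D] [BorelSpace D] [FiniteDimensional ℝ D]
  {μ : Measure D} [μ.IsAddHaarMeasure]

lemma integral_conj_mul_self_ne_zero {f : 𝓢(D, ℂ)} (hf : f ≠ 0) :
    ∫ x, conj (f x) * f x ∂μ ≠ 0 := by
  have hsq : Integrable (fun x => ‖f x‖ ^ 2) μ :=
    (memLp_two_iff_integrable_sq_norm f.continuous.aestronglyMeasurable).1 (f.memLp 2 μ)
  simp_rw [conj_mul', ← ofReal_pow, integral_complex_ofReal, ofReal_ne_zero]
  intro h0
  apply hf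
  have hae : (fun x => ‖f x‖ ^ 2) =ᵐ[μ] fun _ => (0 : ℝ) :=
    (integral_eq_zero_iff_of_nonneg (fun x => by positivity) hsq).1 h0
  ext x
  simpa using congrFun ((f.continuous.norm.pow 2).ae_eq_iff_eq μ continuous_const |>.1 hae) x

end Conjugation

section ContinuousIntegral

variable {U V E : Type*} [NormedAddCommGroup U] [NormedSpace ℝ U]
  [NormedAddCommGroup V] [NormedSpace ℝ V] [FiniteDimensional ℝ V] [MeasurableSpace V]
  [BorelSpace V] {μ : Measure V} [μ.IsAddHaarMeasure]
  [NormedAddCommGroup E] [NormedSpace ℝ E]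

theorem continuous_integral_snd (W : 𝓢(U × V, E)) : Continuous fun u => ∫ v, W (u, v) ∂μ := by
  set N := Module.finrank ℝ V + 1
  set C := 2 ^ N * (Finset.Iic (N, 0)).sup (fun m => SchwartzMap.seminorm ℝ m.1 m.2) W
  have hdecay : ∀ u v, ‖W (u, v)‖ ≤ C * (1 + ‖v‖) ^ (-(N : ℝ)) := by
    intro u v
    have h := one_add_le_sup_seminorm_apply (𝕜 := ℝ) (m := (N, 0)) le_rfl le_rfl W (u, v)
    rw [norm_iteratedFDeriv_zero] at h
    rw [Real.rpow_neg (by positivity), Real.rpow_natCast, ← div_eq_mul_inv,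
      le_div_iff₀ (by positivity), mul_comm]
    calc (1 + ‖v‖) ^ N * ‖W (u, v)‖ ≤ (1 + ‖(u, v)‖) ^ N * ‖W (u, v)‖ := by
          gcongr; exact norm_snd_le (u, v)
      _ ≤ C := h
  exact continuous_of_dominated
    (fun u => (W.continuous.comp (Continuous.prodMk_right u)).aestronglyMeasurable)
    (fun u => .of_forall (hdecay u))
    ((integrable_one_add_norm (by simp [N])).const_mul C)
    (.of_forall fun v => W.continuous.comp (Continuous.prodMk_left v))

end ContinuousIntegral

section FiberIntegral

variable {U V E : Type*}
  [NormedAddCommGroup U] [InnerProductSpace ℝ U] [FiniteDimensional ℝ U]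
  [MeasurableSpace U] [BorelSpace U]
  [NormedAddCommGroup V] [InnerProductSpace ℝ V] [FiniteDimensional ℝ V]
  [MeasurableSpace V] [BorelSpace V]
  [NormedAddCommGroup E] [NormedSpace ℂ E]

/-- The projection-slice theorem. -/
theorem fourier_integral_snd (W : 𝓢(U × V, E)) (ξ : U) :
    𝓕 (fun u => ∫ v, W (u, v)) ξ =
      𝓕 (W ∘ WithLp.ofLp : WithLp 2 (U × V) → E) (WithLp.inlL 2 U V ξ) := by
  have : (volume : Measure (U × V)).IsAddHaarMeasure := Measure.prod.instIsAddHaarMeasure _ _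
  set G : U × V → E := fun p => 𝐞 (-⟪p.1, ξ⟫) • W p
  have hG : Integrable G :=
    (Real.fourierIntegral_convergent_iff' ((innerSL ℝ).comp (ContinuousLinearMap.fst ℝ U V)) ξ).2
      W.integrable
  rw [Real.fourier_eq, Real.fourier_eq]
  calc ∫ u, 𝐞 (-⟪u, ξ⟫) • ∫ v, W (u, v) = ∫ u, ∫ v, G (u, v) := by
        congr with u; exact (integral_smul _ _).symm
    _ = ∫ p, G p := (integral_prod G hG).symm
    _ = ∫ q : WithLp 2 (U × V), G q.ofLp :=
        ((WithLp.volume_preserving_symm_measurableEquiv_toLp_prod U V).integral_comp' G).symm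
    _ = _ := by simp [G]

variable [CompleteSpace E]

-- `U × V` carries the sup norm; the Fourier transform needs the Euclidean product `WithLp 2`.
variable (U V E) in
def fiberIntegralCLM : 𝓢(U × V, E) →L[ℂ] 𝓢(U, E) :=
  fourierInvCLM ℂ 𝓢(U, E) ∘L
    compCLMOfAntilipschitz ℂ (WithLp.inlL 2 U V).hasTemperateGrowth
      (WithLp.isometry_inlL 2 U V).antilipschitz ∘L
    fourierCLM ℂ 𝓢(WithLp 2 (U × V), E) ∘L
    compCLMOfContinuousLinearEquiv ℂ (WithLp.prodContinuousLinearEquiv 2 ℝ U V)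

theorem fiberIntegralCLM_apply (W : 𝓢(U × V, E)) (u : U) :
    fiberIntegralCLM U V E W u = ∫ v, W (u, v) := by
  have : (volume : Measure (U × V)).IsAddHaarMeasure := Measure.prod.instIsAddHaarMeasure _ _
  set S := compCLMOfAntilipschitz ℂ (WithLp.inlL 2 U V).hasTemperateGrowth
    (WithLp.isometry_inlL 2 U V).antilipschitz
    (𝓕 (compCLMOfContinuousLinearEquiv ℂ (WithLp.prodContinuousLinearEquiv 2 ℝ U V) W))
  have hS : ⇑S = 𝓕 (fun u => ∫ v, W (u, v)) := funext fun ξ => (fourier_integral_snd W ξ).symm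
  change (𝓕⁻ S) u = _
  rw [fourierInv_coe, hS]
  exact W.integrable.integral_prod_left.fourierInv_fourier_eq (hS ▸ S.integrable)
    (continuous_integral_snd W).continuousAt

end FiberIntegral

section Pi

variable {ι κ E : Type*} [Fintype ι] [Fintype κ]
  [NormedAddCommGroup E] [NormedSpace ℂ E] [CompleteSpace E]

-- `ι → ℝ` carries the sup norm, so the Fourier side lives on `EuclideanSpace ℝ ι`.
variable (ι κ E) in
def piFiberIntegralCLM : 𝓢((ι → ℝ) × (κ → ℝ), E) →L[ℂ] 𝓢(ι → ℝ, E) :=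
  compCLMOfContinuousLinearEquiv ℂ (EuclideanSpace.equiv ι ℝ).symm ∘L
    fiberIntegralCLM (EuclideanSpace ℝ ι) (EuclideanSpace ℝ κ) E ∘L
    compCLMOfContinuousLinearEquiv ℂ
      ((EuclideanSpace.equiv ι ℝ).prodCongr (EuclideanSpace.equiv κ ℝ))

theorem piFiberIntegralCLM_apply (W : 𝓢((ι → ℝ) × (κ → ℝ), E)) (x : ι → ℝ) :
    piFiberIntegralCLM ι κ E W x = ∫ y, W (x, y) := by
  simp only [piFiberIntegralCLM, ContinuousLinearMap.coe_comp, Function.comp_apply,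
    compCLMOfContinuousLinearEquiv_apply, fiberIntegralCLM_apply]
  exact (EuclideanSpace.volume_preserving_symm_measurableEquiv_toLp κ).integral_comp'
    (fun y => W (x, y))

def partialInnerCLM (χ : 𝓢(κ → ℝ, ℂ)) : 𝓢((ι → ℝ) × (κ → ℝ), ℂ) →L[ℂ] 𝓢(ι → ℝ, ℂ) :=
  piFiberIntegralCLM ι κ ℂ ∘L smulLeftCLM ℂ (fun p : (ι → ℝ) × (κ → ℝ) => conj (χ p.2))

theorem partialInnerCLM_apply (χ : 𝓢(κ → ℝ, ℂ)) (Φ : 𝓢((ι → ℝ) × (κ → ℝ), ℂ)) (x : ι → ℝ) :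
    partialInnerCLM χ Φ x = ∫ y, conj (χ y) * Φ (x, y) := by
  have hχ : Function.HasTemperateGrowth fun p : (ι → ℝ) × (κ → ℝ) => conj (χ p.2) :=
    (conjCLM χ).hasTemperateGrowth.comp
      (ContinuousLinearMap.snd ℝ (ι → ℝ) (κ → ℝ)).hasTemperateGrowth
  simp [partialInnerCLM, piFiberIntegralCLM_apply, smulLeftCLM_apply_apply hχ]

end Pi

end SchwartzMap

end

theorem stmt9 (n k : ℕ)
    -- `Ŝ` : a unitary operator mapping `S(ℝ^{n+k})` continuously into itself,
    -- together with `Ŝ⁻¹`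
    (Sh : 𝓢((Fin n → ℝ) × (Fin k → ℝ), ℂ) ≃L[ℂ] 𝓢((Fin n → ℝ) × (Fin k → ℝ), ℂ))
    -- the tensor product `(ψ ⊗ χ)(x,y) = ψ(x)χ(y)` of Schwartz functions
    (tensor : 𝓢(Fin n → ℝ, ℂ) → 𝓢(Fin k → ℝ, ℂ) → 𝓢((Fin n → ℝ) × (Fin k → ℝ), ℂ))
    (htensor : ∀ ψ χ p, tensor ψ χ p = ψ p.1 * χ p.2)
    -- the adjoint intertwiners `T*_{Ŝ,χ}`, mapping `S(ℝ^{n+k})` into `S(ℝⁿ)`: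
    (Tstar : 𝓢(Fin k → ℝ, ℂ) → 𝓢((Fin n → ℝ) × (Fin k → ℝ), ℂ) → 𝓢(Fin n → ℝ, ℂ))
    -- `(T*_{Ŝ,χ}Φ)(x) = ∫ conj(χ(y)) (ŜΦ)(x,y) dy`
    (hTstar : ∀ (χ : 𝓢(Fin k → ℝ, ℂ)) (Φ : 𝓢((Fin n → ℝ) × (Fin k → ℝ), ℂ))
      (x : Fin n → ℝ), Tstar χ Φ x = ∫ y : Fin k → ℝ, conj (χ y) * Sh Φ (x, y))
    -- complex conjugation of Schwartz functions
    (conjX : 𝓢(Fin n → ℝ, ℂ) → 𝓢(Fin n → ℝ, ℂ))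
    (hconjX : ∀ φ x, conjX φ x = conj (φ x))
    (conjXY : 𝓢((Fin n → ℝ) × (Fin k → ℝ), ℂ) → 𝓢((Fin n → ℝ) × (Fin k → ℝ), ℂ))
    (hconjXY : ∀ Φ p, conjXY Φ p = conj (Φ p))
    -- the formal adjoints `A†` and `Ã†`
    (Adag : 𝓢(Fin n → ℝ, ℂ) →L[ℂ] 𝓢(Fin n → ℝ, ℂ))
    (Atdag : 𝓢((Fin n → ℝ) × (Fin k → ℝ), ℂ) →L[ℂ] 𝓢((Fin n → ℝ) × (Fin k → ℝ), ℂ))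
    -- the intertwining relation `T*_{Ŝ,χ} ∘ Ã† = A† ∘ T*_{Ŝ,χ}`
    (hintdag : ∀ (χ : 𝓢(Fin k → ℝ, ℂ)) (Φ : 𝓢((Fin n → ℝ) × (Fin k → ℝ), ℂ)),
      Tstar χ (Atdag Φ) = Adag (Tstar χ Φ))
    -- a nonzero tempered distribution `ψ ∈ S'(ℝⁿ)` which is a generalized eigenvector
    -- of `A` with generalized eigenvalue `λ`
    (ψ : 𝓢(Fin n → ℝ, ℂ) →L[ℂ] ℂ) (hψ : ψ ≠ 0) (lam : ℂ)
    (heig : ∀ φ : 𝓢(Fin n → ℝ, ℂ), ψ (conjX (Adag φ)) = lam * ψ (conjX φ))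
    (χ : 𝓢(Fin k → ℝ, ℂ)) (hχ : χ ≠ 0) :
    ∃ Ψ : 𝓢((Fin n → ℝ) × (Fin k → ℝ), ℂ) →L[ℂ] ℂ,
      (∀ Θ : 𝓢((Fin n → ℝ) × (Fin k → ℝ), ℂ), Ψ (conjXY Θ) = ψ (conjX (Tstar χ Θ))) ∧
      Ψ ≠ 0 ∧
      (∀ Θ : 𝓢((Fin n → ℝ) × (Fin k → ℝ), ℂ),
        Ψ (conjXY (Atdag Θ)) = lam * Ψ (conjXY Θ)) := by
  have hconjX' : conjX = conjCLM := funext fun φ => ext (hconjX φ)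
  have hconjXY' : conjXY = conjCLM := funext fun Φ => ext (hconjXY Φ)
  subst hconjX' hconjXY'
  set T := partialInnerCLM χ ∘L Sh.toContinuousLinearMap
  have hT : ∀ Θ, T Θ = Tstar χ Θ := fun Θ => ext fun x => by
    simp [T, partialInnerCLM_apply, hTstar]
  have hΨ : ∀ Θ, (ψ ∘L conjugateCLM T) (conjCLM Θ) = ψ (conjCLM (Tstar χ Θ)) := by
    simp [hT]
  refine ⟨ψ ∘L conjugateCLM T, hΨ, fun hΨ0 => ?_, fun Θ => by rw [hΨ, hΨ, hintdag, heig]⟩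
  obtain ⟨φ₀, hφ₀⟩ : ∃ φ₀, ψ φ₀ ≠ 0 := by simpa [DFunLike.ne_iff] using hψ
  have htest : Tstar χ (Sh.symm (tensor (conjCLM φ₀) χ)) =
      (∫ y, conj (χ y) * χ y) • conjCLM φ₀ := ext fun x => by
    rw [hTstar, smul_apply, smul_eq_mul, ← integral_mul_const]
    congr with y
    rw [Sh.apply_symm_apply, htensor]
    ring
  have := hΨ (Sh.symm (tensor (conjCLM φ₀) χ))
  rw [hΨ0, htest, conjCLM_smul, conjCLM_conjCLM, map_smul, smul_eq_mul] at this
  exact mul_ne_zero (by simpa using integral_conj_mul_self_ne_zero hχ) hφ₀ this.symm
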